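/- arXiv:2012.14895 — 2 statements merged into one kernel-verified Lean document; each statement's English description precedes it below -/
import Mathlib

section
/- Let 𝔤 be a finite-dimensional complex Lie algebra equipped with a nondegenerate invariant symmetric bilinear form κ (i.e. κ([x,y],z) = κ(x,[y,z]) for all x,y,z). Define f : 𝔤³ → ℂ by f(A₀,A₁,A₂) = κ(A₁,[A₀,A₂]). Then the differential of f at (A₀,A₁,A₂) is zero if and only if [A₀,A₁] = [A₁,A₂] = [A₂,A₀] = 0, i.e. the triple is commuting. -/
theorem differential_zero_iff_commuting {𝔤 : Type*} [LieRing 𝔤] [LieAlgebra ℂ 𝔤]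
    [FiniteDimensional ℂ 𝔤]
    (κ : 𝔤 →ₗ[ℂ] 𝔤 →ₗ[ℂ] ℂ)
    (hsymm : ∀ x y : 𝔤, κ x y = κ y x)
    (hnd : ∀ x : 𝔤, (∀ y : 𝔤, κ x y = 0) → x = 0)
    (hinv : ∀ x y z : 𝔤, κ ⁅x, y⁆ z = κ x ⁅y, z⁆)
    (A₀ A₁ A₂ : 𝔤) :
    (∀ a₀ a₁ a₂ : 𝔤, κ a₁ ⁅A₀, A₂⁆ + κ A₁ ⁅a₀, A₂⁆ + κ A₁ ⁅A₀, a₂⁆ = 0) ↔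
      (⁅A₀, A₁⁆ = 0 ∧ ⁅A₁, A₂⁆ = 0 ∧ ⁅A₂, A₀⁆ = 0) := by
  constructor
  · intro h
    have h02 : ⁅A₀, A₂⁆ = 0 := by
      apply hnd
      intro y
      have := h 0 y 0
      simpa [hsymm ⁅A₀, A₂⁆ y] using this
    have h21 : ⁅A₂, A₁⁆ = 0 := by
      apply hnd
      intro y
      have := h y 0 0
      rw [h02] at this
      simp only [map_zero, LinearMap.zero_apply, zero_add, lie_zero, add_zero] at this
      calc κ ⁅A₂, A₁⁆ y = κ y ⁅A₂, A₁⁆ := hsymm _ _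
        _ = κ ⁅y, A₂⁆ A₁ := (hinv _ _ _).symm
        _ = κ A₁ ⁅y, A₂⁆ := hsymm _ _
        _ = 0 := this
    have h10 : ⁅A₁, A₀⁆ = 0 := by
      apply hnd
      intro y
      have := h 0 0 y
      rw [h02] at this
      simp only [map_zero, LinearMap.zero_apply, zero_add, zero_lie, add_zero] at this
      calc κ ⁅A₁, A₀⁆ y = κ A₁ ⁅A₀, y⁆ := hinv _ _ _
        _ = 0 := this
    refine ⟨?_, ?_, ?_⟩
    · simpa using congrArg Neg.neg h10
    · simpa using congrArg Neg.neg h21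
    · simpa using congrArg Neg.neg h02
  · rintro ⟨h01, h12, h20⟩ a₀ a₁ a₂
    have h02 : ⁅A₀, A₂⁆ = 0 := by simpa using congrArg Neg.neg h20
    have h21 : ⁅A₂, A₁⁆ = 0 := by simpa using congrArg Neg.neg h12
    have h10 : ⁅A₁, A₀⁆ = 0 := by simpa using congrArg Neg.neg h01
    have t1 : κ a₁ ⁅A₀, A₂⁆ = 0 := by rw [h02]; simp
    have t2 : κ A₁ ⁅a₀, A₂⁆ = 0 := by
      calc κ A₁ ⁅a₀, A₂⁆ = κ ⁅a₀, A₂⁆ A₁ := hsymm _ _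
        _ = κ a₀ ⁅A₂, A₁⁆ := hinv _ _ _
        _ = 0 := by rw [h21]; simp
    have t3 : κ A₁ ⁅A₀, a₂⁆ = 0 := by
      calc κ A₁ ⁅A₀, a₂⁆ = κ ⁅A₁, A₀⁆ a₂ := (hinv _ _ _).symm
        _ = 0 := by rw [h10]; simp
    rw [t1, t2, t3]; ring
end

section
/- There exist matrices A₀, A₁, A₂ ∈ 𝔰𝔩(3,ℂ), with A₁ diagonal and A₀, A₂ lying in the span of the diagonal traceless matrices together with the Ad(diag(1,ε,ε²))-eigenspace of eigenvalue ε, such that the eight matrices A₀, A₁, A₂, A₀A₁+A₁A₀, A₂A₁+A₁A₂, A₀², A₂², A₁²+A₀A₂+A₂A₀ are linearly independent over ℂ. -/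
/-!
Take `A(ζ) = A₀ + A₁ ζ + A₂ ζ²` with `A₀ = E₁₃ + E₂₁`, `A₁ = diag(0, -1, 1)` and
`A₂ = diag(1, 0, -1) + E₃₂`. Conjugation by `diag(1, ε, ε²)` multiplies the `(i, j)` entry by
`ε^(i - j)`, so the `ε`-eigenspace is spanned by `E₁₃, E₂₁, E₃₂` and these matrices have the required
shape. The eight matrices are then explicit, and eight of their nine entries already give a linear
system whose only solution is zero.
-/

noncomputable def ε : ℂ := Complex.exp (2 * Real.pi * Complex.I / 3)

noncomputable def dmat : Matrix (Fin 3) (Fin 3) ℂ := Matrix.diagonal ![1, ε, ε ^ 2]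

def V (a : ℕ) : Set (Matrix (Fin 3) (Fin 3) ℂ) :=
  {X | X.trace = 0 ∧ dmat * X * dmat⁻¹ = ε ^ a • X}

open Matrix

lemma eps_pow_three : ε ^ 3 = 1 := by
  rw [ε, ← Complex.exp_nat_mul, ← Complex.exp_two_pi_mul_I]
  congr 1
  push_cast
  ring

lemma eps_ne_zero : ε ≠ 0 := Complex.exp_ne_zero _

lemma dmat_eq_diagonal_pow : dmat = diagonal fun i : Fin 3 => ε ^ (i : ℕ) := by
  rw [dmat]
  congr 1
  ext i
  fin_cases i <;> simp

lemma dmat_inv_eq_diagonal : dmat⁻¹ = diagonal fun i : Fin 3 => (ε ^ (i : ℕ))⁻¹ := by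
  refine inv_eq_right_inv ?_
  rw [dmat_eq_diagonal_pow, diagonal_mul_diagonal, ← diagonal_one]
  congr 1
  ext i
  exact mul_inv_cancel₀ (pow_ne_zero _ eps_ne_zero)

lemma dmat_conj_apply (X : Matrix (Fin 3) (Fin 3) ℂ) (i j : Fin 3) :
    (dmat * X * dmat⁻¹) i j = ε ^ (i : ℕ) * X i j * (ε ^ (j : ℕ))⁻¹ := by
  rw [dmat_inv_eq_diagonal, mul_diagonal, dmat_eq_diagonal_pow, diagonal_mul]

lemma mem_V_of_apply_ne_zero {a : ℕ} {X : Matrix (Fin 3) (Fin 3) ℂ} (htr : X.trace = 0)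
    (hX : ∀ i j, X i j ≠ 0 → (i : ℕ) = ((j : ℕ) + a) % 3) : X ∈ V a := by
  refine ⟨htr, ?_⟩
  ext i j
  rw [dmat_conj_apply, Matrix.smul_apply, smul_eq_mul]
  by_cases hij : X i j = 0
  · simp [hij]
  have hpow : ε ^ (i : ℕ) = ε ^ (j : ℕ) * ε ^ a := by
    rw [hX i j hij, ← pow_eq_pow_mod _ eps_pow_three, pow_add]
  have hε : ε ^ (j : ℕ) ≠ 0 := pow_ne_zero _ eps_ne_zero
  rw [hpow]
  field_simp

def A₀ : Matrix (Fin 3) (Fin 3) ℂ := !![0, 0, 1; 1, 0, 0; 0, 0, 0]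
def A₁ : Matrix (Fin 3) (Fin 3) ℂ := !![0, 0, 0; 0, -1, 0; 0, 0, 1]
def D₂ : Matrix (Fin 3) (Fin 3) ℂ := !![1, 0, 0; 0, 0, 0; 0, 0, -1]
def E₂ : Matrix (Fin 3) (Fin 3) ℂ := !![0, 0, 0; 0, 0, 0; 0, 1, 0]
def A₂ : Matrix (Fin 3) (Fin 3) ℂ := D₂ + E₂

lemma A₀_mem_V_one : A₀ ∈ V 1 := by
  refine mem_V_of_apply_ne_zero (by simp [A₀, trace_fin_three]) fun i j => ?_
  fin_cases i <;> fin_cases j <;> simp [A₀]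

lemma A₁_mem_V_zero : A₁ ∈ V 0 := by
  refine mem_V_of_apply_ne_zero (by simp [A₁, trace_fin_three]) fun i j => ?_
  fin_cases i <;> fin_cases j <;> simp [A₁]

lemma D₂_mem_V_zero : D₂ ∈ V 0 := by
  refine mem_V_of_apply_ne_zero (by simp [D₂, trace_fin_three]) fun i j => ?_
  fin_cases i <;> fin_cases j <;> simp [D₂]

lemma E₂_mem_V_one : E₂ ∈ V 1 := by
  refine mem_V_of_apply_ne_zero (by simp [E₂, trace_fin_three]) fun i j => ?_
  fin_cases i <;> fin_cases j <;> simp [E₂]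

lemma zero_mem_V (a : ℕ) : (0 : Matrix (Fin 3) (Fin 3) ℂ) ∈ V a :=
  mem_V_of_apply_ne_zero (trace_zero _ _) fun _ _ h => absurd rfl h

lemma A₂_eq : A₂ = !![1, 0, 0; 0, 0, 0; 0, 1, -1] := by
  simp [A₂, D₂, E₂]

lemma anticomm_A₀_A₁ : A₀ * A₁ + A₁ * A₀ = !![0, 0, 1; -1, 0, 0; 0, 0, 0] := by
  ext i j; fin_cases i <;> fin_cases j <;> simp [A₀, A₁]

lemma anticomm_A₂_A₁ : A₂ * A₁ + A₁ * A₂ = !![0, 0, 0; 0, 0, 0; 0, 0, -2] := by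
  ext i j; fin_cases i <;> fin_cases j <;> norm_num [A₂_eq, A₁, mul_apply, Fin.sum_univ_three]

lemma A₀_sq : A₀ ^ 2 = !![0, 0, 0; 0, 0, 1; 0, 0, 0] := by
  ext i j; fin_cases i <;> fin_cases j <;> simp [A₀, sq, mul_apply, Fin.sum_univ_three]

lemma A₂_sq : A₂ ^ 2 = !![1, 0, 0; 0, 0, 0; 0, -1, 1] := by
  ext i j; fin_cases i <;> fin_cases j <;> simp [A₂_eq, sq, mul_apply, Fin.sum_univ_three]

lemma A₁_sq_add_anticomm_A₀_A₂ :
    A₁ ^ 2 + A₀ * A₂ + A₂ * A₀ = !![0, 1, 0; 1, 1, 0; 1, 0, 1] := by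
  ext i j; fin_cases i <;> fin_cases j <;> simp [A₀, A₁, A₂_eq, sq]

lemma linearIndependent_coefficients_and_products :
    LinearIndependent ℂ ![A₀, A₁, A₂, A₀ * A₁ + A₁ * A₀, A₂ * A₁ + A₁ * A₂,
      A₀ ^ 2, A₂ ^ 2, A₁ ^ 2 + A₀ * A₂ + A₂ * A₀] := by
  rw [anticomm_A₀_A₁, anticomm_A₂_A₁, A₀_sq, A₂_sq, A₁_sq_add_anticomm_A₀_A₂, A₂_eq,
    Fintype.linearIndependent_iff]
  intro c hc
  have entry (i j : Fin 3) := congrFun₂ hc i j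
  have e00 : c 2 + c 6 = 0 := by simpa [Fin.sum_univ_eight, A₀, A₁] using entry 0 0
  have e02 : c 0 + c 3 = 0 := by simpa [Fin.sum_univ_eight, A₀, A₁] using entry 0 2
  have e10 : c 0 - c 3 + c 7 = 0 := by
    simpa [Fin.sum_univ_eight, A₀, A₁, sub_eq_add_neg] using entry 1 0
  have e11 : c 7 - c 1 = 0 := by simpa [Fin.sum_univ_eight, A₀, A₁, sub_eq_neg_add] using entry 1 1
  have e12 : c 5 = 0 := by simpa [Fin.sum_univ_eight, A₀, A₁] using entry 1 2
  have e20 : c 7 = 0 := by simpa [Fin.sum_univ_eight, A₀, A₁] using entry 2 0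
  have e21 : c 2 - c 6 = 0 := by simpa [Fin.sum_univ_eight, A₀, A₁, sub_eq_add_neg] using entry 2 1
  have e22 : c 1 - c 2 - 2 * c 4 + c 6 + c 7 = 0 := by
    simpa [Fin.sum_univ_eight, A₀, A₁, sub_eq_add_neg, mul_comm] using entry 2 2
  intro i
  fin_cases i <;> simp only [Fin.reduceFinMk]
  · linear_combination (e02 + e10 - e20) / 2
  · linear_combination e20 - e11
  · linear_combination (e00 + e21) / 2
  · linear_combination (e02 - e10 + e20) / 2
  · linear_combination (2 * e20 - e11 - e21 - e22) / 2
  · exact e12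
  · linear_combination (e00 - e21) / 2
  · exact e20

theorem exists_independent_coefficients :
    ∃ A₀ A₁ A₂ : Matrix (Fin 3) (Fin 3) ℂ,
      A₁ ∈ V 0 ∧
      (∃ D E, D ∈ V 0 ∧ E ∈ V 1 ∧ A₀ = D + E) ∧
      (∃ D E, D ∈ V 0 ∧ E ∈ V 1 ∧ A₂ = D + E) ∧
      LinearIndependent ℂ ![A₀, A₁, A₂, A₀ * A₁ + A₁ * A₀, A₂ * A₁ + A₁ * A₂,
        A₀ ^ 2, A₂ ^ 2, A₁ ^ 2 + A₀ * A₂ + A₂ * A₀] :=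
  ⟨A₀, A₁, A₂, A₁_mem_V_zero, ⟨0, A₀, zero_mem_V 0, A₀_mem_V_one, (zero_add _).symm⟩,
    ⟨D₂, E₂, D₂_mem_V_zero, E₂_mem_V_one, rfl⟩, linearIndependent_coefficients_and_products⟩
end
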